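/- (General strong maximum principle) Assume in addition that (X,d) is locally compact and σ-compact and that μ is finite on compact sets. Let U : X → ℝ be measurable and let v ∈ D(I) satisfy v ≥ 0 μ-a.e., U₊·min{v,1} integrable on every compact subset of X (U₊ := max(U,0)), and I[φ,v] + ∫_X φ U v dμ ≥ 0 for every 0 ≤ φ ∈ D(I) with compact support (the integral being assumed to exist in (−∞, +∞]). Then either v = 0 μ-a.e. on X or v > 0 μ-a.e. on X. -/

import Mathlib

/-!
If both `{v = 0}` and `{v > 0}` had positive measure, take compact pieces `S ⊆ {v = 0}` and
`B ⊆ {v > 0}` of positive measure and a Lipschitz bump `φ` with compact support, equal to `1`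
on `S`. Test the inequality with `φₙ = φ · cutoff n ∘ v`, where `cutoff n t` is `1 - (n+1) t`
clamped to `[0, 1]`, so that `φₙ → φ · 1_{v = 0}`. The potential term tends to `0` by dominated
convergence. Since `cutoff n` is decreasing, the integrands of `I[φₙ, v]` are bounded above by
an integrable function independent of `n`; their limit is nonpositive, and equal to
`-k(x,y) v(y)` on `S × B`. A reverse Fatou argument then keeps `I[φₙ, v]` eventually below a
fixed negative constant, which contradicts `I[φₙ, v] + ∫ φₙ U v ≥ 0`.
-/

open MeasureTheory Real
open scoped ENNReal

noncomputable section

variable {X : Type*}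

/-- The quadratic form `I[w] = (1/2)∬ k(x,y)(w(x)-w(y))² dμ dμ`, as an extended real. -/
def formI [MeasurableSpace X] (μ : Measure X) (k : X → X → ℝ≥0∞) (w : X → ℝ) : ℝ≥0∞ :=
  (1 / 2 : ℝ≥0∞) *
    ∫⁻ p : X × X, k p.1 p.2 * ENNReal.ofReal ((w p.1 - w p.2) ^ 2) ∂(μ.prod μ)

/-- The form domain `D(I)`. -/
def memDI [MeasurableSpace X] (μ : Measure X) (k : X → X → ℝ≥0∞) (w : X → ℝ) : Prop :=
  Measurable w ∧ formI μ k w < ⊤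

/-- The bilinear form `I[v,w]`. -/
def formI₂ [MeasurableSpace X] (μ : Measure X) (k : X → X → ℝ≥0∞) (v w : X → ℝ) : ℝ :=
  (1 / 2) *
    ∫ p : X × X, (k p.1 p.2).toReal * (v p.1 - v p.2) * (w p.1 - w p.2) ∂(μ.prod μ)

open Filter Set Topology
open scoped NNReal

theorem ofReal_integral_le_lintegral_ofReal {α : Type*} [MeasurableSpace α] {μ : Measure α}
    {f : α → ℝ} (hf : Integrable f μ) :
    ENNReal.ofReal (∫ a, f a ∂μ) ≤ ∫⁻ a, ENNReal.ofReal (f a) ∂μ := by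
  refine ENNReal.ofReal_le_of_le_toReal ?_
  rw [integral_eq_lintegral_pos_part_sub_lintegral_neg_part hf]
  exact sub_le_self _ ENNReal.toReal_nonneg

/-- A reverse Fatou lemma. -/
theorem eventually_integral_lt_of_tendsto_of_le {α : Type*} [MeasurableSpace α] {μ : Measure α}
    {F : ℕ → α → ℝ} {f g h : α → ℝ} (hF : ∀ n, Integrable (F n) μ) (hh : Integrable h μ)
    (hg : Integrable g μ) (hFh : ∀ n, F n ≤ᵐ[μ] h)
    (hlim : ∀ᵐ a ∂μ, Tendsto (fun n ↦ F n a) atTop (𝓝 (f a))) (hfg : f ≤ᵐ[μ] g)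
    {b : ℝ} (hb : ∫ a, g a ∂μ < b) : ∀ᶠ n in atTop, ∫ a, F n a ∂μ < b := by
  rcases le_or_gt (∫ a, h a ∂μ) (∫ a, g a ∂μ) with hhg | hhg
  · exact Eventually.of_forall fun n ↦
      (integral_mono_ae (hF n) hh (hFh n)).trans_lt (hhg.trans_lt hb)
  have hfatou : ENNReal.ofReal (∫ a, h a ∂μ - ∫ a, g a ∂μ)
      ≤ liminf (fun n ↦ ENNReal.ofReal (∫ a, h a ∂μ - ∫ a, F n a ∂μ)) atTop :=
    calc ENNReal.ofReal (∫ a, h a ∂μ - ∫ a, g a ∂μ)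
        ≤ ∫⁻ a, ENNReal.ofReal (h a - g a) ∂μ := by
          rw [← integral_sub hh hg]; exact ofReal_integral_le_lintegral_ofReal (hh.sub hg)
      _ ≤ ∫⁻ a, liminf (fun n ↦ ENNReal.ofReal (h a - F n a)) atTop ∂μ := by
          refine lintegral_mono_ae ?_
          filter_upwards [hlim, hfg] with a ha hfga
          rw [(ENNReal.tendsto_ofReal (tendsto_const_nhds.sub ha)).liminf_eq]
          exact ENNReal.ofReal_le_ofReal (by linarith)
      _ ≤ liminf (fun n ↦ ∫⁻ a, ENNReal.ofReal (h a - F n a) ∂μ) atTop :=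
          lintegral_liminf_le' fun n ↦ (hh.sub (hF n)).aemeasurable.ennreal_ofReal
      _ = liminf (fun n ↦ ENNReal.ofReal (∫ a, h a ∂μ - ∫ a, F n a ∂μ)) atTop := by
          congr 1; ext n
          rw [← integral_sub hh (hF n)]
          refine (ofReal_integral_eq_lintegral_ofReal (hh.sub (hF n)) ?_).symm
          filter_upwards [hFh n] with a ha using sub_nonneg.2 ha
  have hlt : ENNReal.ofReal (∫ a, h a ∂μ - b)
      < liminf (fun n ↦ ENNReal.ofReal (∫ a, h a ∂μ - ∫ a, F n a ∂μ)) atTop :=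
    ((ENNReal.ofReal_lt_ofReal_iff (by linarith)).2 (by linarith)).trans_le hfatou
  filter_upwards [eventually_lt_of_lt_liminf hlt] with n hn
  linarith [(ENNReal.ofReal_lt_ofReal_iff'.1 hn).1]

theorem exists_isCompact_measure_inter_ne_zero {α : Type*} [TopologicalSpace α]
    [SigmaCompactSpace α] [MeasurableSpace α] {μ : Measure α} {s : Set α} (hs : μ s ≠ 0) :
    ∃ K, IsCompact K ∧ μ (s ∩ K) ≠ 0 := by
  by_contra! h
  refine hs (measure_mono_null ?_ (measure_iUnion_null fun n ↦ h _ (isCompact_compactCovering α n)))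
  rw [← inter_iUnion, iUnion_compactCovering, inter_univ]

theorem ae_eq_zero_or_ae_pos_iff {α : Type*} [MeasurableSpace α] {μ : Measure α} {v : α → ℝ}
    (hv0 : ∀ᵐ x ∂μ, 0 ≤ v x) :
    ((∀ᵐ x ∂μ, v x = 0) ∨ (∀ᵐ x ∂μ, 0 < v x)) ↔
      μ {x | 0 < v x} = 0 ∨ μ {x | v x = 0} = 0 := by
  rw [ae_iff, ae_iff]
  congr! 2 <;> refine measure_congr (eventuallyEq_set.2 ?_) <;>
    filter_upwards [hv0] with x hx
  · exact (LE.le.lt_iff_ne' hx).symm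
  · exact (LE.le.not_lt_iff_eq hx).trans eq_comm

theorem exists_lipschitzWith_hasCompactSupport_eqOn_one {α : Type*} [MetricSpace α]
    [LocallyCompactSpace α] {K : Set α} (hK : IsCompact K) :
    ∃ φ : α → ℝ, ∃ L : ℝ≥0, LipschitzWith L φ ∧ HasCompactSupport φ ∧
      (∀ x, 0 ≤ φ x ∧ φ x ≤ 1) ∧ EqOn φ 1 K := by
  obtain ⟨K', hK'c, hKK'⟩ := exists_compact_superset hK
  obtain ⟨r, hr, hrK'⟩ := hK.exists_thickening_subset_open isOpen_interior hKK'
  refine ⟨fun x ↦ thickenedIndicator hr K x, _,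
    (LipschitzWith.subtype_val _).comp (lipschitzWith_thickenedIndicator hr K), ?_,
    fun x ↦ ⟨NNReal.coe_nonneg _, NNReal.coe_le_one.2 (thickenedIndicator_le_one hr K x)⟩,
    fun x hx ↦ by simp [thickenedIndicator_one hr K hx]⟩
  refine HasCompactSupport.intro hK'c fun x hx ↦ ?_
  rw [thickenedIndicator_zero hr K fun h ↦ hx (interior_subset (hrK' h)), NNReal.coe_zero]

theorem abs_mul_sub_mul_le {a a' b b' : ℝ} (ha' : |a'| ≤ 1) (hb : |b| ≤ 1) :
    |a * b - a' * b'| ≤ |a - a'| + |b - b'| :=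
  calc |a * b - a' * b'| = |b * (a - a') + a' * (b - b')| := by ring_nf
    _ ≤ |b| * |a - a'| + |a'| * |b - b'| := by rw [← abs_mul, ← abs_mul]; exact abs_add_le _ _
    _ ≤ 1 * |a - a'| + 1 * |b - b'| := by gcongr
    _ = |a - a'| + |b - b'| := by ring

def cutoff (n : ℕ) (t : ℝ) : ℝ := max 0 (min (1 - (n + 1) * t) 1)

namespace cutoff

variable (n : ℕ) {t : ℝ}

theorem nonneg : 0 ≤ cutoff n t := le_max_left _ _

theorem le_one : cutoff n t ≤ 1 := max_le zero_le_one (min_le_right _ _)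

theorem eq_zero (h : 1 ≤ (n + 1) * t) : cutoff n t = 0 :=
  max_eq_left ((min_le_left _ _).trans (by linarith))

theorem lt_one_of_ne_zero (h : cutoff n t ≠ 0) : t < 1 := by
  by_contra! ht
  exact h (eq_zero n (by nlinarith [(n.cast_nonneg : (0 : ℝ) ≤ n)]))

theorem continuous : Continuous (cutoff n) := by
  unfold cutoff; fun_prop

theorem antitone : Antitone (cutoff n) := fun s t hst ↦
  max_le_max le_rfl (min_le_min (by nlinarith [(n.cast_nonneg : (0 : ℝ) ≤ n)]) le_rfl)

theorem abs_sub_le (s t : ℝ) : |cutoff n s - cutoff n t| ≤ (n + 1) * |s - t| := by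
  calc |cutoff n s - cutoff n t|
      ≤ |min (1 - (n + 1) * s) 1 - min (1 - (n + 1) * t) 1| := by
        simpa only [cutoff, max_comm (0 : ℝ)] using abs_max_sub_max_le_abs _ _ 0
    _ ≤ max |1 - (n + 1) * s - (1 - (n + 1) * t)| |(1 : ℝ) - 1| := abs_min_sub_min_le_max _ _ _ _
    _ = (n + 1) * |s - t| := by
        rw [sub_self, abs_zero,
          show 1 - (n + 1) * s - (1 - (n + 1) * t) = (n + 1) * (t - s) by ring, abs_mul, abs_of_pos (by positivity), abs_sub_comm, max_eq_left (by positivity)]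

theorem tendsto (ht : 0 ≤ t) :
    Tendsto (fun n ↦ cutoff n t) atTop (𝓝 (if t = 0 then 1 else 0)) := by
  split_ifs with h0
  · simp [h0, cutoff]
  have hlarge : Tendsto (fun n : ℕ ↦ ((n : ℝ) + 1) * t) atTop atTop :=
    (tendsto_atTop_add_const_right _ 1 tendsto_natCast_atTop_atTop).atTop_mul_const
      (lt_of_le_of_ne ht (Ne.symm h0))
  exact tendsto_const_nhds.congr'
    ((hlarge.eventually_ge_atTop 1).mono fun n hn ↦ (eq_zero n hn).symm)

end cutoff

def formIntegrand (k : X → X → ℝ≥0∞) (u w : X → ℝ) (p : X × X) : ℝ :=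
  (k p.1 p.2).toReal * (u p.1 - u p.2) * (w p.1 - w p.2)

section Pointwise

variable {k : X → X → ℝ≥0∞} {φ v : X → ℝ}

theorem formIntegrand_self_nonneg (k : X → X → ℝ≥0∞) (u : X → ℝ) (p : X × X) :
    0 ≤ formIntegrand k u u p := by
  rw [formIntegrand, mul_assoc]
  exact mul_nonneg ENNReal.toReal_nonneg (mul_self_nonneg _)

theorem formIntegrand_mul_cutoff_le (hφ0 : ∀ x, 0 ≤ φ x) (n : ℕ) (p : X × X) :
    formIntegrand k (fun x ↦ φ x * cutoff n (v x)) v p ≤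
      (formIntegrand k φ φ p + formIntegrand k v v p) / 2 := by
  obtain ⟨x, y⟩ := p
  have hanti : (cutoff n (v x) - cutoff n (v y)) * (v x - v y) ≤ 0 :=
    ((cutoff.antitone n).antivary monotone_id).sub_mul_sub_nonpos (v y) (v x)
  have hc0 := cutoff.nonneg n (t := v x)
  have hc1 := cutoff.le_one n (t := v x)
  -- with `c = cutoff n ∘ v`: `φ x c x - φ y c y = c x (φ x - φ y) + φ y (c x - c y)`, where the
  -- second term pairs nonpositively with `v x - v y` and the first is bounded by AM-GM
  have key : (φ x * cutoff n (v x) - φ y * cutoff n (v y)) * (v x - v y) ≤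
      ((φ x - φ y) * (φ x - φ y) + (v x - v y) * (v x - v y)) / 2 := by
    nlinarith [mul_nonpos_of_nonneg_of_nonpos (hφ0 y) hanti, sq_nonneg (φ x - φ y - (v x - v y)),
      sq_nonneg (φ x - φ y + (v x - v y)), mul_nonneg hc0 (sq_nonneg (φ x - φ y - (v x - v y))),
      mul_nonneg (sub_nonneg.2 hc1) (sq_nonneg (φ x - φ y + (v x - v y)))]
  have hk0 : 0 ≤ (k x y).toReal := ENNReal.toReal_nonneg
  simp only [formIntegrand]
  nlinarith [mul_le_mul_of_nonneg_left key hk0]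

theorem tendsto_mul_cutoff {x : X} (hx : 0 ≤ v x) :
    Tendsto (fun n ↦ φ x * cutoff n (v x)) atTop (𝓝 ({x | v x = 0}.indicator φ x)) := by
  by_cases h0 : v x = 0 <;>
    simpa [indicator_apply, h0] using (cutoff.tendsto hx).const_mul (φ x)

theorem tendsto_formIntegrand_mul_cutoff {p : X × X} (h1 : 0 ≤ v p.1) (h2 : 0 ≤ v p.2) :
    Tendsto (fun n ↦ formIntegrand k (fun x ↦ φ x * cutoff n (v x)) v p) atTop
      (𝓝 (formIntegrand k ({x | v x = 0}.indicator φ) v p)) :=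
  (((tendsto_mul_cutoff h1).sub (tendsto_mul_cutoff h2)).const_mul _).mul_const _

theorem formIntegrand_indicator_le (hφ0 : ∀ x, 0 ≤ φ x) {p : X × X} (h1 : 0 ≤ v p.1) :
    formIntegrand k ({x | v x = 0}.indicator φ) v p ≤
      -((k p.1 p.2).toReal * {x | v x = 0}.indicator φ p.1 * v p.2) := by
  set ψ := {x | v x = 0}.indicator φ
  have hψv : ∀ x, ψ x * v x = 0 := fun x ↦ by
    by_cases h : v x = 0 <;> simp [ψ, h]
  have hψ0 : ∀ x, 0 ≤ ψ x := fun x ↦ indicator_nonneg (fun x _ ↦ hφ0 x) x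
  have hexp : formIntegrand k ψ v p =
      -((k p.1 p.2).toReal * ψ p.1 * v p.2) - (k p.1 p.2).toReal * (ψ p.2 * v p.1) := by
    simp only [formIntegrand]
    linear_combination (k p.1 p.2).toReal * (hψv p.1 + hψv p.2)
  rw [hexp]
  linarith [mul_nonneg (ENNReal.toReal_nonneg (a := k p.1 p.2)) (mul_nonneg (hψ0 p.2) h1)]

end Pointwise

section Form

variable [MeasurableSpace X] {μ : Measure X} {k : X → X → ℝ≥0∞} {u v w φ : X → ℝ}

theorem formI₂_eq_integral_formIntegrand (μ : Measure X) (k : X → X → ℝ≥0∞) (u w : X → ℝ) :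
    formI₂ μ k u w = 1 / 2 * ∫ p, formIntegrand k u w p ∂(μ.prod μ) :=
  rfl

theorem measurable_formIntegrand (hk : Measurable (Function.uncurry k)) (hu : Measurable u)
    (hw : Measurable w) : Measurable (formIntegrand k u w) :=
  (hk.ennreal_toReal.mul ((hu.comp measurable_fst).sub (hu.comp measurable_snd))).mul
    ((hw.comp measurable_fst).sub (hw.comp measurable_snd))

theorem memDI_iff_lintegral_lt_top :
    memDI μ k u ↔ Measurable u ∧
      ∫⁻ p, k p.1 p.2 * ENNReal.ofReal ((u p.1 - u p.2) ^ 2) ∂(μ.prod μ) < ⊤ := by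
  simp only [memDI, formI, ENNReal.mul_lt_top_iff]
  aesop

namespace memDI

theorem lintegral_lt_top (hu : memDI μ k u) :
    ∫⁻ p, k p.1 p.2 * ENNReal.ofReal ((u p.1 - u p.2) ^ 2) ∂(μ.prod μ) < ⊤ :=
  (memDI_iff_lintegral_lt_top.1 hu).2

theorem integrable_formIntegrand_self (hk : Measurable (Function.uncurry k))
    (hu : memDI μ k u) : Integrable (formIntegrand k u u) (μ.prod μ) := by
  refine ⟨(measurable_formIntegrand hk hu.1 hu.1).aestronglyMeasurable,
    (lintegral_mono fun p ↦ ?_).trans_lt hu.lintegral_lt_top⟩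
  rw [Real.enorm_eq_ofReal_abs, abs_of_nonneg (formIntegrand_self_nonneg k u p), formIntegrand,
    mul_assoc, ← sq, ENNReal.ofReal_mul ENNReal.toReal_nonneg]
  exact mul_le_mul_left ENNReal.ofReal_toReal_le _

theorem integrable_formIntegrand (hk : Measurable (Function.uncurry k)) (hu : memDI μ k u)
    (hw : memDI μ k w) : Integrable (formIntegrand k u w) (μ.prod μ) := by
  refine ((hu.integrable_formIntegrand_self hk).add (hw.integrable_formIntegrand_self hk)).mono'
    (measurable_formIntegrand hk hu.1 hw.1).aestronglyMeasurable (ae_of_all _ fun p ↦ ?_)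
  have hk0 : 0 ≤ (k p.1 p.2).toReal := ENNReal.toReal_nonneg
  simp only [formIntegrand, Real.norm_eq_abs, Pi.add_apply, abs_mul, abs_of_nonneg hk0]
  nlinarith [mul_nonneg hk0 (sq_nonneg (|u p.1 - u p.2| - |w p.1 - w p.2|)),
    sq_abs (u p.1 - u p.2), sq_abs (w p.1 - w p.2)]

theorem ae_ne_top_of_ne (hk : Measurable (Function.uncurry k)) (hu : memDI μ k u) :
    ∀ᵐ p ∂(μ.prod μ), u p.1 ≠ u p.2 → k p.1 p.2 ≠ ⊤ := by
  have hmeas : Measurable fun p : X × X ↦ k p.1 p.2 * ENNReal.ofReal ((u p.1 - u p.2) ^ 2) :=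
    hk.mul (((hu.1.comp measurable_fst).sub (hu.1.comp measurable_snd)).pow_const 2).ennreal_ofReal
  filter_upwards [ae_lt_top hmeas hu.lintegral_lt_top.ne] with p hp hne htop
  rw [htop, ENNReal.top_mul (ENNReal.ofReal_pos.2 (sq_pos_iff.2 (sub_ne_zero.2 hne))).ne'] at hp
  exact lt_irrefl _ hp

end memDI

theorem memDI_of_abs_sub_le (hk : Measurable (Function.uncurry k)) (hw : Measurable w)
    (hu : memDI μ k u) (hv : memDI μ k v) (a b : ℝ)
    (h : ∀ x y, |w x - w y| ≤ a * |u x - u y| + b * |v x - v y|) : memDI μ k w := by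
  set E : (X → ℝ) → X × X → ℝ≥0∞ := fun f p ↦ k p.1 p.2 * ENNReal.ofReal ((f p.1 - f p.2) ^ 2)
  have hEu : Measurable (E u) :=
    hk.mul (((hu.1.comp measurable_fst).sub (hu.1.comp measurable_snd)).pow_const 2).ennreal_ofReal
  have hpt : ∀ p,
      E w p ≤ ENNReal.ofReal (2 * a ^ 2) * E u p + ENNReal.ofReal (2 * b ^ 2) * E v p := by
    intro p
    have hsq : (w p.1 - w p.2) ^ 2 ≤
        2 * a ^ 2 * (u p.1 - u p.2) ^ 2 + 2 * b ^ 2 * (v p.1 - v p.2) ^ 2 := by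
      have h' := h p.1 p.2
      nlinarith [abs_nonneg (w p.1 - w p.2), sq_abs (w p.1 - w p.2), sq_abs (u p.1 - u p.2),
        sq_abs (v p.1 - v p.2), sq_nonneg (a * |u p.1 - u p.2| - b * |v p.1 - v p.2|)]
    calc E w p ≤ k p.1 p.2 * ENNReal.ofReal
          (2 * a ^ 2 * (u p.1 - u p.2) ^ 2 + 2 * b ^ 2 * (v p.1 - v p.2) ^ 2) :=
          mul_le_mul_right (ENNReal.ofReal_le_ofReal hsq) _
      _ = _ := by
          rw [ENNReal.ofReal_add (by positivity) (by positivity),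
            ENNReal.ofReal_mul (p := 2 * a ^ 2) (by positivity),
            ENNReal.ofReal_mul (p := 2 * b ^ 2) (by positivity)]
          ring
  refine memDI_iff_lintegral_lt_top.2 ⟨hw, (lintegral_mono hpt).trans_lt ?_⟩
  rw [lintegral_add_left (hEu.const_mul _), lintegral_const_mul' _ _ ENNReal.ofReal_ne_top,
    lintegral_const_mul' _ _ ENNReal.ofReal_ne_top]
  exact ENNReal.add_lt_top.2 ⟨ENNReal.mul_lt_top ENNReal.ofReal_lt_top hu.lintegral_lt_top,
    ENNReal.mul_lt_top ENNReal.ofReal_lt_top hv.lintegral_lt_top⟩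

theorem memDI_of_lipschitzWith [MetricSpace X] [BorelSpace X] [SFinite μ]
    (hksymm : ∀ x y, k x y = k y x)
    (hkd : ∀ K : Set X, IsCompact K →
      ∫⁻ p in K ×ˢ univ, k p.1 p.2 * ENNReal.ofReal (dist p.1 p.2 ^ 2) ∂(μ.prod μ) < ⊤)
    {φ : X → ℝ} {L : ℝ≥0} (hφ : LipschitzWith L φ) (hφc : HasCompactSupport φ) :
    memDI μ k φ := by
  set K := tsupport φ
  have hKm : MeasurableSet K := (isClosed_tsupport φ).measurableSet
  set E : X × X → ℝ≥0∞ := fun p ↦ k p.1 p.2 * ENNReal.ofReal (dist p.1 p.2 ^ 2)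
  have hswap : ∫⁻ p in univ ×ˢ K, E p ∂(μ.prod μ) = ∫⁻ p in K ×ˢ univ, E p ∂(μ.prod μ) := by
    rw [← lintegral_indicator (MeasurableSet.univ.prod hKm),
      ← lintegral_indicator (hKm.prod MeasurableSet.univ), ← lintegral_prod_swap]
    congr 1; ext ⟨x, y⟩
    by_cases hx : x ∈ K <;> simp [E, hx, hksymm y x, dist_comm y x]
  have hpt : ∀ p : X × X, k p.1 p.2 * ENNReal.ofReal ((φ p.1 - φ p.2) ^ 2) ≤
      ENNReal.ofReal (L ^ 2) * (K ×ˢ univ ∪ univ ×ˢ K).indicator E p := by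
    rintro ⟨x, y⟩
    by_cases hxy : x ∈ K ∨ y ∈ K
    · have hmem : (x, y) ∈ K ×ˢ univ ∪ univ ×ˢ K :=
        hxy.imp (mk_mem_prod · (mem_univ y)) (mk_mem_prod (mem_univ x) ·)
      rw [indicator_of_mem hmem]
      have hsq : (φ x - φ y) ^ 2 ≤ L ^ 2 * dist x y ^ 2 := by
        rw [← mul_pow, ← sq_abs]
        exact pow_le_pow_left₀ (abs_nonneg _) (by simpa [Real.dist_eq] using hφ.dist_le_mul x y) 2
      calc k x y * ENNReal.ofReal ((φ x - φ y) ^ 2)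
          ≤ k x y * ENNReal.ofReal (L ^ 2 * dist x y ^ 2) := by gcongr
        _ = _ := by rw [ENNReal.ofReal_mul (by positivity)]; simp only [E]; ring
    · push Not at hxy
      simp [image_eq_zero_of_notMem_tsupport hxy.1, image_eq_zero_of_notMem_tsupport hxy.2]
  refine memDI_iff_lintegral_lt_top.2 ⟨hφ.continuous.measurable, (lintegral_mono hpt).trans_lt ?_⟩
  rw [lintegral_const_mul' _ _ ENNReal.ofReal_ne_top,
    lintegral_indicator ((hKm.prod MeasurableSet.univ).union (MeasurableSet.univ.prod hKm))]
  refine ENNReal.mul_lt_top ENNReal.ofReal_lt_top ((lintegral_union_le _ _ _).trans_lt ?_)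
  rw [hswap]
  exact ENNReal.add_lt_top.2 ⟨hkd K hφc, hkd K hφc⟩

theorem memDI_mul_cutoff (hk : Measurable (Function.uncurry k)) (hφ : memDI μ k φ)
    (hφ01 : ∀ x, 0 ≤ φ x ∧ φ x ≤ 1) (hv : memDI μ k v) (n : ℕ) :
    memDI μ k (fun x ↦ φ x * cutoff n (v x)) := by
  refine memDI_of_abs_sub_le hk (hφ.1.mul ((cutoff.continuous n).measurable.comp hv.1)) hφ hv 1
    (n + 1) fun x y ↦ ?_
  have hc : |cutoff n (v x)| ≤ 1 := by rw [abs_of_nonneg (cutoff.nonneg n)]; exact cutoff.le_one n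
  have hφy : |φ y| ≤ 1 := by rw [abs_of_nonneg (hφ01 y).1]; exact (hφ01 y).2
  calc |φ x * cutoff n (v x) - φ y * cutoff n (v y)|
      ≤ |φ x - φ y| + |cutoff n (v x) - cutoff n (v y)| := abs_mul_sub_mul_le hφy hc
    _ ≤ 1 * |φ x - φ y| + (n + 1) * |v x - v y| := by
        rw [one_mul]; gcongr; exact cutoff.abs_sub_le n _ _

end Form

def crossingWeight (k : X → X → ℝ≥0∞) (v : X → ℝ) (S B : Set X) : X × X → ℝ :=
  (S ×ˢ B).indicator fun p ↦ min ((k p.1 p.2).toReal * v p.2) 1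

section Crossing

variable {k : X → X → ℝ≥0∞} {φ v : X → ℝ} {S B : Set X}

theorem crossingWeight_nonneg (hBv : ∀ y ∈ B, 0 < v y) (p : X × X) :
    0 ≤ crossingWeight k v S B p :=
  indicator_nonneg (fun _ hq ↦ le_min (mul_nonneg ENNReal.toReal_nonneg (hBv _ hq.2).le)
    zero_le_one) p

theorem crossingWeight_le (hφ0 : ∀ x, 0 ≤ φ x) (hS : ∀ x ∈ S, v x = 0 ∧ φ x = 1) {p : X × X}
    (h2 : 0 ≤ v p.2) :
    crossingWeight k v S B p ≤ (k p.1 p.2).toReal * {x | v x = 0}.indicator φ p.1 * v p.2 := by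
  by_cases hp : p ∈ S ×ˢ B
  · obtain ⟨hv1, hφ1⟩ := hS _ hp.1
    rw [crossingWeight, indicator_of_mem hp, indicator_of_mem (show p.1 ∈ {x | v x = 0} from hv1),
      hφ1, mul_one]
    exact min_le_left _ _
  · rw [crossingWeight, indicator_of_notMem hp]
    exact mul_nonneg (mul_nonneg ENNReal.toReal_nonneg (indicator_nonneg (fun x _ ↦ hφ0 x) _)) h2

variable [MeasurableSpace X] {μ : Measure X}

theorem integrable_crossingWeight [SFinite μ] (hk : Measurable (Function.uncurry k))
    (hv : Measurable v) (hS : MeasurableSet S) (hB : MeasurableSet B) (hSf : μ S ≠ ⊤)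
    (hBf : μ B ≠ ⊤) (hBv : ∀ y ∈ B, 0 < v y) :
    Integrable (crossingWeight k v S B) (μ.prod μ) := by
  have hone : Integrable ((S ×ˢ B).indicator fun _ ↦ (1 : ℝ)) (μ.prod μ) :=
    (integrable_indicator_iff (hS.prod hB)).2 (integrableOn_const (by
      rw [Measure.prod_prod]; exact ENNReal.mul_ne_top hSf hBf))
  refine hone.mono' ?_ (ae_of_all _ fun p ↦ ?_)
  · exact ((hk.ennreal_toReal.mul (hv.comp measurable_snd)).min measurable_const).indicator
      (hS.prod hB) |>.aestronglyMeasurable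
  · rw [Real.norm_eq_abs, abs_of_nonneg (crossingWeight_nonneg hBv p)]
    exact indicator_le_indicator (min_le_right _ _)

theorem integral_crossingWeight_pos [SFinite μ] (hk : Measurable (Function.uncurry k))
    (hkpos : ∀ x y, 0 < k x y) (hv : memDI μ k v) (hSv : ∀ x ∈ S, v x = 0)
    (hBv : ∀ y ∈ B, 0 < v y) (hS0 : μ S ≠ 0) (hB0 : μ B ≠ 0)
    (hint : Integrable (crossingWeight k v S B) (μ.prod μ)) :
    0 < ∫ p, crossingWeight k v S B p ∂(μ.prod μ) := by
  rw [integral_pos_iff_support_of_nonneg (crossingWeight_nonneg hBv) hint]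
  refine (pos_iff_ne_zero.2 ?_).trans_le (measure_mono_ae (s := S ×ˢ B) ?_)
  · rw [Measure.prod_prod]
    exact mul_ne_zero hS0 hB0
  filter_upwards [hv.ae_ne_top_of_ne hk] with p hp (hpSB : p ∈ S ×ˢ B)
  have hv1 := hSv _ hpSB.1
  have hv2 := hBv _ hpSB.2
  have hk0 : 0 < (k p.1 p.2).toReal :=
    ENNReal.toReal_pos (hkpos _ _).ne' (hp (by rw [hv1]; exact hv2.ne))
  show crossingWeight k v S B p ≠ 0
  rw [crossingWeight, indicator_of_mem hpSB]
  exact (lt_min (mul_pos hk0 hv2) one_pos).ne'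

end Crossing

section Limits

variable [MeasurableSpace X] {μ : Measure X} {k : X → X → ℝ≥0∞} {φ v : X → ℝ}

theorem eventually_integral_formIntegrand_mul_cutoff_lt [SFinite μ]
    (hk : Measurable (Function.uncurry k)) (hφ : memDI μ k φ) (hφ01 : ∀ x, 0 ≤ φ x ∧ φ x ≤ 1)
    (hv : memDI μ k v) (hv0 : ∀ᵐ x ∂μ, 0 ≤ v x) {S B : Set X}
    (hS : ∀ x ∈ S, v x = 0 ∧ φ x = 1) (hG : Integrable (crossingWeight k v S B) (μ.prod μ))
    {b : ℝ} (hb : -∫ p, crossingWeight k v S B p ∂(μ.prod μ) < b) :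
    ∀ᶠ n in atTop,
      ∫ p, formIntegrand k (fun x ↦ φ x * cutoff n (v x)) v p ∂(μ.prod μ) < b := by
  have hφ0 : ∀ x, 0 ≤ φ x := fun x ↦ (hφ01 x).1
  have hvv : ∀ᵐ p ∂(μ.prod μ), 0 ≤ v p.1 ∧ 0 ≤ v p.2 :=
    (Measure.quasiMeasurePreserving_fst.ae hv0).and (Measure.quasiMeasurePreserving_snd.ae hv0)
  refine eventually_integral_lt_of_tendsto_of_le
    (f := formIntegrand k ({x | v x = 0}.indicator φ) v)
    (fun n ↦ (memDI_mul_cutoff hk hφ hφ01 hv n).integrable_formIntegrand hk hv)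
    (((hφ.integrable_formIntegrand_self hk).add (hv.integrable_formIntegrand_self hk)).div_const 2)
    hG.neg (fun n ↦ ae_of_all _ (formIntegrand_mul_cutoff_le hφ0 n)) ?_ ?_
    (by simpa only [Pi.neg_apply, integral_neg] using hb)
  · filter_upwards [hvv] with p hp using tendsto_formIntegrand_mul_cutoff hp.1 hp.2
  · filter_upwards [hvv] with p hp
    exact (formIntegrand_indicator_le hφ0 hp.1).trans (neg_le_neg (crossingWeight_le hφ0 hS hp.2))

end Limits

section Potential

variable [TopologicalSpace X] {φ U v : X → ℝ}

theorem norm_mul_cutoff_mul_le (hφ01 : ∀ x, 0 ≤ φ x ∧ φ x ≤ 1)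
    (U : X → ℝ) (n : ℕ) {x : X} (hx : 0 ≤ v x) :
    ‖φ x * cutoff n (v x) * U x * v x‖ ≤
      (tsupport φ).indicator (fun x ↦ max (U x) 0 * min (v x) 1) x + |min (φ x * U x * v x) 0| := by
  have hind : 0 ≤ (tsupport φ).indicator (fun x ↦ max (U x) 0 * min (v x) 1) x :=
    indicator_apply_nonneg fun _ ↦ mul_nonneg (le_max_right _ _) (le_min hx zero_le_one)
  by_cases hφc : φ x * cutoff n (v x) = 0
  · rw [hφc, zero_mul, zero_mul, norm_zero]
    positivity
  rw [indicator_of_mem (subset_tsupport _ (left_ne_zero_of_mul hφc)),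
    min_eq_left (cutoff.lt_one_of_ne_zero n (right_ne_zero_of_mul hφc)).le, Real.norm_eq_abs]
  obtain ⟨hφ0, hφ1⟩ := hφ01 x
  have hφc1 : φ x * cutoff n (v x) ≤ 1 := mul_le_one₀ hφ1 (cutoff.nonneg n) (cutoff.le_one n)
  have habs : |φ x * cutoff n (v x) * U x * v x| = φ x * cutoff n (v x) * |U x * v x| := by
    rw [mul_assoc _ (U x), abs_mul, abs_of_nonneg (mul_nonneg hφ0 (cutoff.nonneg n))]
  rcases le_total 0 (U x) with hU | hU
  · have hUv : 0 ≤ U x * v x := mul_nonneg hU hx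
    rw [max_eq_left hU, habs, abs_of_nonneg hUv]
    nlinarith [abs_nonneg (min (φ x * U x * v x) 0)]
  · have hUv : U x * v x ≤ 0 := mul_nonpos_of_nonpos_of_nonneg hU hx
    have hφUv : φ x * U x * v x ≤ 0 := by
      rw [mul_assoc]; exact mul_nonpos_of_nonneg_of_nonpos hφ0 hUv
    rw [max_eq_right hU, zero_mul, zero_add, habs, min_eq_left hφUv, abs_of_nonpos hφUv,
      abs_of_nonpos hUv]
    nlinarith [mul_le_of_le_one_right hφ0 (cutoff.le_one n (t := v x))]

variable [MeasurableSpace X] [OpensMeasurableSpace X] {μ : Measure X}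

theorem integrable_mul_cutoff_mul (hφ : Measurable φ) (hφ01 : ∀ x, 0 ≤ φ x ∧ φ x ≤ 1)
    (hU : Measurable U) (hv : Measurable v) (hv0 : ∀ᵐ x ∂μ, 0 ≤ v x)
    (hUloc : IntegrableOn (fun x ↦ max (U x) 0 * min (v x) 1) (tsupport φ) μ)
    (hneg : Integrable (fun x ↦ min (φ x * U x * v x) 0) μ) (n : ℕ) :
    Integrable (fun x ↦ φ x * cutoff n (v x) * U x * v x) μ :=
  ((hUloc.integrable_indicator (isClosed_tsupport φ).measurableSet).add hneg.abs).mono'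
    ((hφ.mul ((cutoff.continuous n).measurable.comp hv)).mul hU |>.mul hv).aestronglyMeasurable
    (by filter_upwards [hv0] with x hx using norm_mul_cutoff_mul_le hφ01 U n hx)

theorem tendsto_integral_mul_cutoff_mul (hφ : Measurable φ) (hφ01 : ∀ x, 0 ≤ φ x ∧ φ x ≤ 1)
    (hU : Measurable U) (hv : Measurable v) (hv0 : ∀ᵐ x ∂μ, 0 ≤ v x)
    (hUloc : IntegrableOn (fun x ↦ max (U x) 0 * min (v x) 1) (tsupport φ) μ)
    (hneg : Integrable (fun x ↦ min (φ x * U x * v x) 0) μ) :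
    Tendsto (fun n ↦ ∫ x, φ x * cutoff n (v x) * U x * v x ∂μ) atTop (𝓝 0) := by
  have hlim : ∀ᵐ x ∂μ, Tendsto (fun n ↦ φ x * cutoff n (v x) * U x * v x) atTop (𝓝 0) := by
    filter_upwards [hv0] with x hx
    have hzero : {x | v x = 0}.indicator φ x * U x * v x = 0 := by
      by_cases h : v x = 0 <;> simp [h]
    simpa only [hzero] using ((tendsto_mul_cutoff (φ := φ) hx).mul_const (U x)).mul_const (v x)
  simpa using tendsto_integral_of_dominated_convergence _
    (fun n ↦ (integrable_mul_cutoff_mul hφ hφ01 hU hv hv0 hUloc hneg n).aestronglyMeasurable)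
    ((hUloc.integrable_indicator (isClosed_tsupport φ).measurableSet).add hneg.abs)
    (fun n ↦ by filter_upwards [hv0] with x hx using norm_mul_cutoff_mul_le hφ01 U n hx) hlim

end Potential

theorem general_strong_maximum_principle_general [MetricSpace X] [MeasurableSpace X] [BorelSpace X]
    [LocallyCompactSpace X] [SigmaCompactSpace X]
    (μ : Measure X) [IsFiniteMeasureOnCompacts μ]
    (k : X → X → ℝ≥0∞) (hkmeas : Measurable (Function.uncurry k))
    (hkpos : ∀ x y, 0 < k x y) (hksymm : ∀ x y, k x y = k y x)
    (hk : ∀ K : Set X, IsCompact K →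
      ∫⁻ p in K ×ˢ (Set.univ : Set X),
          k p.1 p.2 * ENNReal.ofReal (dist p.1 p.2 ^ 2) ∂(μ.prod μ) < ⊤)
    (U : X → ℝ) (hU : Measurable U)
    (v : X → ℝ) (hv : memDI μ k v) (hv0 : ∀ᵐ x ∂μ, 0 ≤ v x)
    (hUloc : ∀ K : Set X, IsCompact K →
      IntegrableOn (fun x => max (U x) 0 * min (v x) 1) K μ)
    (hineq : ∀ φ : X → ℝ, memDI μ k φ → (∀ x, 0 ≤ φ x) → HasCompactSupport φ →
      Integrable (fun x => min (φ x * U x * v x) 0) μ ∧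
        (Integrable (fun x => φ x * U x * v x) μ →
          0 ≤ formI₂ μ k φ v + ∫ x, φ x * U x * v x ∂μ)) :
    (∀ᵐ x ∂μ, v x = 0) ∨ (∀ᵐ x ∂μ, 0 < v x) := by
  rw [ae_eq_zero_or_ae_pos_iff hv0]
  refine or_iff_not_and_not.2 fun ⟨hB, hA⟩ ↦ ?_
  obtain ⟨K₁, hK₁, hS0⟩ := exists_isCompact_measure_inter_ne_zero hA
  obtain ⟨K₂, hK₂, hB0⟩ := exists_isCompact_measure_inter_ne_zero hB
  obtain ⟨φ, L, hφL, hφc, hφ01, hφK₁⟩ := exists_lipschitzWith_hasCompactSupport_eqOn_one hK₁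
  have hφm : Measurable φ := hφL.continuous.measurable
  have hφ : memDI μ k φ := memDI_of_lipschitzWith hksymm hk hφL hφc
  have hφneg := (hineq φ hφ (fun x ↦ (hφ01 x).1) hφc).1
  set S := {x | v x = 0} ∩ K₁
  set B := {x | 0 < v x} ∩ K₂
  have hG : Integrable (crossingWeight k v S B) (μ.prod μ) :=
    integrable_crossingWeight hkmeas hv.1 ((measurableSet_eq_fun hv.1 measurable_const).inter
      hK₁.measurableSet) ((measurableSet_lt measurable_const hv.1).inter hK₂.measurableSet)
      (measure_inter_lt_top_of_right_ne_top hK₁.measure_lt_top.ne).ne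
      (measure_inter_lt_top_of_right_ne_top hK₂.measure_lt_top.ne).ne fun y hy ↦ hy.1
  have hc := integral_crossingWeight_pos hkmeas hkpos hv (fun x hx ↦ hx.1) (fun y hy ↦ hy.1)
    hS0 hB0 hG
  obtain ⟨n, hform, hpot⟩ := ((eventually_integral_formIntegrand_mul_cutoff_lt hkmeas hφ hφ01
    hv hv0 (fun x hx ↦ ⟨hx.1, hφK₁ hx.2⟩) hG (neg_lt_neg (half_lt_self hc))).and
    ((tendsto_integral_mul_cutoff_mul hφm hφ01 hU hv.1 hv0 (hUloc _ hφc) hφneg).eventually_lt_const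
      (div_pos hc four_pos))).exists
  have := (hineq _ (memDI_mul_cutoff hkmeas hφ hφ01 hv n)
    (fun x ↦ mul_nonneg (hφ01 x).1 (cutoff.nonneg n)) hφc.mul_right).2
    (integrable_mul_cutoff_mul hφm hφ01 hU hv.1 hv0 (hUloc _ hφc) hφneg n)
  rw [formI₂_eq_integral_formIntegrand] at this
  linarith

/-- general strong maximum principle. -/
theorem general_strong_maximum_principle [MetricSpace X] [MeasurableSpace X] [BorelSpace X]
    [LocallyCompactSpace X] [SigmaCompactSpace X]
    (μ : Measure X) [SigmaFinite μ] [IsFiniteMeasureOnCompacts μ]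
    (k : X → X → ℝ≥0∞) (hkmeas : Measurable (Function.uncurry k))
    (hkpos : ∀ x y, 0 < k x y) (hksymm : ∀ x y, k x y = k y x)
    (hk : ∀ K : Set X, IsCompact K →
      ∫⁻ p in K ×ˢ (Set.univ : Set X),
          k p.1 p.2 * ENNReal.ofReal (dist p.1 p.2 ^ 2) ∂(μ.prod μ) < ⊤)
    (U : X → ℝ) (hU : Measurable U)
    (v : X → ℝ) (hv : memDI μ k v) (hv0 : ∀ᵐ x ∂μ, 0 ≤ v x)
    (hUloc : ∀ K : Set X, IsCompact K →
      IntegrableOn (fun x => max (U x) 0 * min (v x) 1) K μ)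
    (hineq : ∀ φ : X → ℝ, memDI μ k φ → (∀ x, 0 ≤ φ x) → HasCompactSupport φ →
      Integrable (fun x => min (φ x * U x * v x) 0) μ ∧
        (Integrable (fun x => φ x * U x * v x) μ →
          0 ≤ formI₂ μ k φ v + ∫ x, φ x * U x * v x ∂μ)) :
    (∀ᵐ x ∂μ, v x = 0) ∨ (∀ᵐ x ∂μ, 0 < v x) :=
  general_strong_maximum_principle_general μ k hkmeas hkpos hksymm hk U hU v hv hv0 hUloc hineq
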